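/- arXiv:2208.04004 — 3 statements merged into one kernel-verified Lean document; each statement's English description precedes it below -/
import Mathlib

section
/- The normalizer of SO₃ in GL₃ over an algebraically closed field of characteristic 0 is GO₃, the group of orthogonal similitudes: every g ∈ GL₃(k) with g·SO₃(k)·g⁻¹ = SO₃(k) satisfies gᵀg = λ·I for some nonzero scalar λ. -/
/-!
If `g` normalizes `SO₃`, then `gᵀ g` is invariant under congruence by every rotation:
`Aᵀ (gᵀ g) A = gᵀ g` whenever `g A g⁻¹` is orthogonal. The half-turns `diag(-1,-1,1)` and
`diag(1,-1,-1)` force such a matrix to be diagonal (using `2 ≠ 0`), and the cyclic permutation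
of the axes forces its diagonal entries to agree. The scalar is nonzero since `g` is invertible.
-/

open Matrix

theorem Matrix.transpose_mul_gram_mul_eq_of_conj_orthogonal {n R : Type*} [Fintype n]
    [DecidableEq n] [CommRing R] {G G' A : Matrix n n R} (hG : G' * G = 1)
    (h : (G * A * G')ᵀ * (G * A * G') = 1) :
    Aᵀ * (Gᵀ * G) * A = Gᵀ * G := by
  calc Aᵀ * (Gᵀ * G) * A = (G' * G)ᵀ * Aᵀ * (Gᵀ * G) * A * (G' * G) := by
        rw [hG, transpose_one, Matrix.one_mul, Matrix.mul_one]
    _ = Gᵀ * ((G * A * G')ᵀ * (G * A * G')) * G := by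
        simp only [transpose_mul, Matrix.mul_assoc]
    _ = Gᵀ * G := by rw [h, Matrix.mul_one]

theorem Matrix.apply_eq_zero_of_diagonal_congr_eq {n R : Type*} [Fintype n] [DecidableEq n]
    [CommRing R] [NoZeroDivisors R] [NeZero (2 : R)] {M : Matrix n n R} {d : n → R}
    (hM : (diagonal d)ᵀ * M * diagonal d = M) {i j : n} (hd : d i * d j = -1) : M i j = 0 := by
  have hij := congrFun (congrFun hM i) j
  simp only [diagonal_transpose, mul_diagonal, diagonal_mul] at hij
  have : (2 : R) * M i j = 0 := by linear_combination M i j * hd - hij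
  exact (mul_eq_zero.mp this).resolve_left two_ne_zero

theorem Matrix.eq_smul_one_of_forall_specialOrthogonal_congr_eq {R : Type*} [CommRing R]
    [NoZeroDivisors R] [NeZero (2 : R)] {M : Matrix (Fin 3) (Fin 3) R}
    (hM : ∀ A : Matrix (Fin 3) (Fin 3) R, Aᵀ * A = 1 → A.det = 1 → Aᵀ * M * A = M) :
    M = M 0 0 • 1 := by
  have hdiag (d : Fin 3 → R) (hsq : ∀ i, d i * d i = 1) (hdet : d 0 * d 1 * d 2 = 1) :
      (diagonal d)ᵀ * M * diagonal d = M := by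
    refine hM _ ?_ ?_
    · rw [diagonal_transpose, diagonal_mul_diagonal, ← diagonal_one]
      exact congrArg diagonal (funext hsq)
    · simp [det_diagonal, Fin.prod_univ_three, hdet]
  have h₁ := hdiag ![-1, -1, 1] (fun i => by fin_cases i <;> simp) (by simp)
  have h₂ := hdiag ![1, -1, -1] (fun i => by fin_cases i <;> simp) (by simp)
  have m01 := apply_eq_zero_of_diagonal_congr_eq h₂ (i := 0) (j := 1) (by simp)
  have m02 := apply_eq_zero_of_diagonal_congr_eq h₁ (i := 0) (j := 2) (by simp)
  have m10 := apply_eq_zero_of_diagonal_congr_eq h₂ (i := 1) (j := 0) (by simp)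
  have m12 := apply_eq_zero_of_diagonal_congr_eq h₁ (i := 1) (j := 2) (by simp)
  have m20 := apply_eq_zero_of_diagonal_congr_eq h₁ (i := 2) (j := 0) (by simp)
  have m21 := apply_eq_zero_of_diagonal_congr_eq h₁ (i := 2) (j := 1) (by simp)
  have hcyc := hM !![0, 0, 1; 1, 0, 0; 0, 1, 0]
    (by ext i j; fin_cases i <;> fin_cases j <;> simp [mul_apply, Fin.sum_univ_three])
    (by simp [det_fin_three])
  have m11 : M 1 1 = M 0 0 := by
    simpa [mul_apply, Fin.sum_univ_three] using congrFun (congrFun hcyc 0) 0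
  have m22 : M 2 2 = M 0 0 := by
    simpa [mul_apply, Fin.sum_univ_three, m11] using congrFun (congrFun hcyc 1) 1
  ext i j
  fin_cases i <;> fin_cases j <;> simp [m01, m02, m10, m12, m20, m21, m11, m22]

theorem normalizer_SO3_eq_GO3_general (k : Type*) [Field k] [CharZero k]
    (g : Matrix.GeneralLinearGroup (Fin 3) k)
    (hnorm : ∀ A : Matrix (Fin 3) (Fin 3) k,
      (Aᵀ * A = 1 ∧ A.det = 1) ↔
      (((g : Matrix (Fin 3) (Fin 3) k) * A * ((g⁻¹ : Matrix.GeneralLinearGroup (Fin 3) k) :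
          Matrix (Fin 3) (Fin 3) k))ᵀ *
        ((g : Matrix (Fin 3) (Fin 3) k) * A * ((g⁻¹ : Matrix.GeneralLinearGroup (Fin 3) k) :
          Matrix (Fin 3) (Fin 3) k)) = 1 ∧
       ((g : Matrix (Fin 3) (Fin 3) k) * A * ((g⁻¹ : Matrix.GeneralLinearGroup (Fin 3) k) :
          Matrix (Fin 3) (Fin 3) k)).det = 1)) :
    ∃ lam : k, lam ≠ 0 ∧
      (g : Matrix (Fin 3) (Fin 3) k)ᵀ * (g : Matrix (Fin 3) (Fin 3) k) =
        lam • (1 : Matrix (Fin 3) (Fin 3) k) := by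
  have hgram := eq_smul_one_of_forall_specialOrthogonal_congr_eq fun A hA hdet =>
    transpose_mul_gram_mul_eq_of_conj_orthogonal (Units.inv_mul g) ((hnorm A).1 ⟨hA, hdet⟩).1
  refine ⟨_, fun h0 => ?_, hgram⟩
  have hdet := congrArg det hgram
  rw [h0, zero_smul, det_zero, det_mul, det_transpose] at hdet
  exact GeneralLinearGroup.det_ne_zero g (mul_self_eq_zero.mp hdet)

/-- The normalizer of `SO₃` in `GL₃` over an algebraically closed field of characteristic 0
is `GO₃`: any `g ∈ GL₃(k)` normalizing `SO₃(k)` satisfies `gᵀ g = λ • 1` for some `λ ≠ 0`. -/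
theorem normalizer_SO3_eq_GO3 (k : Type*) [Field k] [IsAlgClosed k] [CharZero k]
    (g : Matrix.GeneralLinearGroup (Fin 3) k)
    (hnorm : ∀ A : Matrix (Fin 3) (Fin 3) k,
      (Aᵀ * A = 1 ∧ A.det = 1) ↔
      (((g : Matrix (Fin 3) (Fin 3) k) * A * ((g⁻¹ : Matrix.GeneralLinearGroup (Fin 3) k) :
          Matrix (Fin 3) (Fin 3) k))ᵀ *
        ((g : Matrix (Fin 3) (Fin 3) k) * A * ((g⁻¹ : Matrix.GeneralLinearGroup (Fin 3) k) :
          Matrix (Fin 3) (Fin 3) k)) = 1 ∧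
       ((g : Matrix (Fin 3) (Fin 3) k) * A * ((g⁻¹ : Matrix.GeneralLinearGroup (Fin 3) k) :
          Matrix (Fin 3) (Fin 3) k)).det = 1)) :
    ∃ lam : k, lam ≠ 0 ∧
      (g : Matrix (Fin 3) (Fin 3) k)ᵀ * (g : Matrix (Fin 3) (Fin 3) k) =
        lam • (1 : Matrix (Fin 3) (Fin 3) k) :=
  normalizer_SO3_eq_GO3_general k g hnorm
end

section
/- Let G be a group and ρ: G → GL₂(ℂ) an irreducible 2-dimensional representation that is not induced from any index-2 subgroup. If ρ ≅ ρ^∨ ⊗ μ for a character μ: G → ℂˣ (where ρ^∨ is the dual), then det ρ = μ. -/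
open Matrix

open Classical in
/-- The extension by zero of a character `χ` of a subgroup `H` to the whole group. -/
noncomputable def extChar {G : Type*} [Group G] (H : Subgroup G) (χ : H →* ℂˣ) : G → ℂ :=
  fun g => if h : g ∈ H then (χ ⟨g, h⟩ : ℂ) else 0

/-- The standard matrix model of the representation of `G` induced from a character `χ`
of an index-two subgroup `H`, with coset representatives `1` and `s`. -/
noncomputable def indRep {G : Type*} [Group G] (H : Subgroup G) (χ : H →* ℂˣ) (s : G) :
    G → Matrix (Fin 2) (Fin 2) ℂ :=
  fun g => Matrix.of
    ![![extChar H χ g, extChar H χ (g * s)],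
      ![extChar H χ (s⁻¹ * g), extChar H χ (s⁻¹ * g * s)]]

/-- A matrix representation is irreducible if its only invariant subspaces are `⊥` and `⊤`. -/
def MatIrred {G : Type*} (n : ℕ) (ρ : G → Matrix (Fin n) (Fin n) ℂ) : Prop :=
  ∀ W : Submodule ℂ (Fin n → ℂ), (∀ g : G, ∀ v ∈ W, (ρ g).mulVec v ∈ W) → W = ⊥ ∨ W = ⊤

/-! Put `J = !![0, 1; -1, 0]`. Since `Mᵀ J M = det M • J` for every `2 × 2` matrix,
`ρ^∨ ≅ ρ ⊗ det⁻¹`, so the hypothesis says `ρ ≅ ρ ⊗ ε` for the character `ε = μ / det ρ`: some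
invertible `A` satisfies `A ρ(g) = ε(g) ρ(g) A`. Taking determinants gives `ε² = 1`. If `ε(s) = -1`,
then `ρ(s)` swaps the eigenspaces of `A` for `c` and `-c`; in a basis `v, ρ(s) v` with `A v = c v`
the matrices `ρ(g)` are diagonal for `g ∈ ker ε` and antidiagonal otherwise, which is exactly the
shape of the representation induced from a character of the index-two subgroup `ker ε`. -/

section

variable {G : Type*} [Group G] {K : Type*}

theorem Matrix.transpose_mul_J_mul_fin_two [CommRing K] (M : Matrix (Fin 2) (Fin 2) K) :
    Mᵀ * !![0, 1; -1, 0] * M = M.det • !![0, 1; -1, 0] := by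
  ext i j
  fin_cases i <;> fin_cases j <;> simp [mul_apply, Fin.sum_univ_two, det_fin_two] <;> ring

theorem Matrix.transpose_eq_det_smul_J_conj_of_mul_eq_one [CommRing K]
    {M N : Matrix (Fin 2) (Fin 2) K} (hMN : M * N = 1) :
    Mᵀ = M.det • (!![0, 1; -1, 0] * N * !![0, -1; 1, 0]) := by
  have hJ : !![(0 : K), 1; -1, 0] * !![0, -1; 1, 0] = 1 := by
    ext i j; fin_cases i <;> fin_cases j <;> simp [mul_apply, Fin.sum_univ_two]
  calc Mᵀ = Mᵀ * !![0, 1; -1, 0] * (M * N) * !![0, -1; 1, 0] := by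
        rw [hMN, mul_one, mul_assoc, hJ, mul_one]
    _ = M.det • (!![0, 1; -1, 0] * N * !![0, -1; 1, 0]) := by
        rw [← mul_assoc, transpose_mul_J_mul_fin_two, smul_mul_assoc, smul_mul_assoc]

noncomputable def MonoidHom.detChar {n : Type*} [Fintype n] [DecidableEq n] [CommRing K]
    (ρ : G →* Matrix n n K) : G →* Kˣ :=
  (Units.map detMonoidHom).comp ρ.toHomUnits

@[simp]
theorem MonoidHom.coe_detChar_apply {n : Type*} [Fintype n] [DecidableEq n] [CommRing K]
    (ρ : G →* Matrix n n K) (g : G) : (ρ.detChar g : K) = (ρ g).det :=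
  rfl

theorem exists_twist_of_dual [CommRing K] (ρ : G →* Matrix (Fin 2) (Fin 2) K) (μ : G →* Kˣ)
    {P : Matrix (Fin 2) (Fin 2) K} (hP : IsUnit P)
    (hPρ : ∀ g, P * ρ g = ((μ g : K) • (ρ g⁻¹)ᵀ) * P) :
    ∃ A : Matrix (Fin 2) (Fin 2) K, IsUnit A ∧
      ∀ g, A * ρ g = ((μ / ρ.detChar) g : K) • (ρ g * A) := by
  have hJ : !![(0 : K), -1; 1, 0] * !![0, 1; -1, 0] = 1 := by
    ext i j; fin_cases i <;> fin_cases j <;> simp [mul_apply, Fin.sum_univ_two]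
  refine ⟨!![0, -1; 1, 0] * P, ?_, fun g => ?_⟩
  · refine IsUnit.mul ?_ hP
    simp [isUnit_iff_isUnit_det, det_fin_two]
  have hε : ((μ / ρ.detChar) g : K) = μ g * (ρ g⁻¹).det := by
    simp [div_eq_mul_inv, ← map_inv]
  have hdual := transpose_eq_det_smul_J_conj_of_mul_eq_one (M := ρ g⁻¹) (N := ρ g)
    (by rw [← map_mul, inv_mul_cancel, map_one])
  rw [mul_assoc, hPρ, hdual, hε, smul_smul, smul_mul_assoc, mul_smul_comm]
  simp only [← mul_assoc, hJ, one_mul]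

theorem twist_pow_card_eq_one {n : Type*} [Fintype n] [DecidableEq n] [CommRing K]
    (ρ : G →* Matrix n n K) (ε : G →* Kˣ) {A : Matrix n n K}
    (hA : IsUnit A) (hAρ : ∀ g, A * ρ g = (ε g : K) • (ρ g * A)) (g : G) :
    (ε g : K) ^ Fintype.card n = 1 := by
  have hunit : IsUnit ((ρ g).det * A.det) :=
    ((ρ.toHomUnits g).isUnit.map detMonoidHom).mul ((isUnit_iff_isUnit_det A).mp hA)
  have h := congrArg det (hAρ g)
  rw [det_mul, det_smul, det_mul, mul_comm] at h
  exact (hunit.mul_eq_right.mp h.symm)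

theorem MonoidHom.index_ker_eq_two [CommRing K] [IsDomain K]
    (ε : G →* Kˣ) (hε : ∀ g, (ε g : K) ^ 2 = 1) {s : G} (hs : ε s ≠ 1) : ε.ker.index = 2 := by
  have hs' : (ε s : K) = -1 := (sq_eq_one_iff.mp (hε s)).resolve_left (by simpa using hs)
  have hne : (1 : K) ≠ -1 := fun h => hs (by ext; rw [hs', ← h, Units.val_one])
  refine Subgroup.index_eq_two_iff.mpr ⟨s, fun b => ?_⟩
  simp only [mem_ker, Units.ext_iff, map_mul, Units.val_mul, hs', Units.val_one, mul_neg_one]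
  rcases sq_eq_one_iff.mp (hε b) with hb | hb <;> simp [hb, hne.symm]

theorem exists_eigenbasis_of_mul_eq_neg_mul [Field K] [IsAlgClosed K] [NeZero (2 : K)]
    {A M : Matrix (Fin 2) (Fin 2) K} (hA : IsUnit A) (hM : IsUnit M) (hAM : A * M = -(M * A)) :
    ∃ (c : K) (Q : Matrix (Fin 2) (Fin 2) K), c ≠ 0 ∧ IsUnit Q ∧
      A * Q = Q * diagonal ![c, -c] ∧ M *ᵥ Q.col 0 = Q.col 1 := by
  obtain ⟨c, hc⟩ := Module.End.exists_eigenvalue (toLin' A)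
  obtain ⟨v, hv⟩ := hc.exists_hasEigenvector
  have hAv : A *ᵥ v = c • v := by simpa using hv.apply_eq_smul
  have hc0 : c ≠ 0 := by
    rintro rfl
    refine hv.2 (mulVec_injective_iff_isUnit.mpr hA ?_)
    rw [hAv, zero_smul, mulVec_zero]
  have hAu : A *ᵥ (M *ᵥ v) = (-c) • (M *ᵥ v) := by
    rw [mulVec_mulVec, hAM, neg_mulVec, ← mulVec_mulVec, hAv, mulVec_smul, neg_smul]
  have hu : Module.End.HasEigenvector (toLin' A) (-c) (M *ᵥ v) := by
    refine ⟨by simpa [Module.End.mem_eigenspace_iff] using hAu, fun h => hv.2 ?_⟩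
    exact mulVec_injective_iff_isUnit.mpr hM (by rwa [mulVec_zero])
  have hindep : LinearIndependent K ![v, M *ᵥ v] := by
    refine Module.End.eigenvectors_linearIndependent' (toLin' A) ![c, -c] ?_ _ ?_
    · have : c ≠ -c := by simp [eq_neg_iff_add_eq_zero, ← two_mul, hc0, two_ne_zero]
      intro i j
      fin_cases i <;> fin_cases j <;> simp [this, this.symm]
    · intro i; fin_cases i; exacts [hv, hu]
  refine ⟨c, (of ![v, M *ᵥ v])ᵀ, hc0,
    (isUnit_transpose _).mpr (linearIndependent_rows_iff_isUnit.mp hindep), ?_, rfl⟩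
  ext i j
  rw [mul_diagonal]
  fin_cases j
  · simpa [mulVec, dotProduct, mul_apply, mul_comm] using congrFun hAv i
  · simpa [mulVec, dotProduct, mul_apply, mul_comm] using congrFun hAu i

theorem Matrix.apply_eq_zero_of_diagonal_mul_eq_smul {n : Type*} [Fintype n] [DecidableEq n]
    [CommRing K] [NoZeroDivisors K] {d : n → K} {M : Matrix n n K} {e : K}
    (h : diagonal d * M = e • (M * diagonal d)) {i j : n} (hij : d i ≠ e * d j) : M i j = 0 := by
  have hij' := congrFun (congrFun h i) j
  rw [diagonal_mul, smul_apply, mul_diagonal, smul_eq_mul] at hij'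
  exact (mul_eq_zero.mp (by linear_combination hij' : (d i - e * d j) * M i j = 0)).resolve_left
    (sub_ne_zero.mpr hij)

theorem exists_eq_indRep (σ : G →* Matrix (Fin 2) (Fin 2) ℂ)
    (H : Subgroup G) (s : G) (hs₀₀ : σ s 0 0 = 0) (hs₁₀ : σ s 1 0 = 1) (hs₁₁ : σ s 1 1 = 0)
    (hH : ∀ h ∈ H, σ h 0 1 = 0) (hHc : ∀ g ∉ H, σ g 0 0 = 0) :
    ∃ χ : H →* ℂˣ, ∀ g, σ g = indRep H χ s g := by
  let χ : H →* ℂ :=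
    { toFun := fun h => σ h 0 0
      map_one' := by simp
      map_mul' := fun a b => by simp [mul_apply, Fin.sum_univ_two, hH a a.2] }
  have hext : ∀ g, extChar H χ.toHomUnits g = σ g 0 0 := by
    intro g
    by_cases hg : g ∈ H
    · simp [extChar, hg, χ]
    · simp [extChar, hg, hHc g hg]
  have h₀₁ : ∀ g, σ g 0 1 = σ (g * s) 0 0 := fun g => by
    simp [mul_apply, Fin.sum_univ_two, hs₀₀, hs₁₀]
  have h₁₀ : ∀ g, σ g 1 0 = σ (s⁻¹ * g) 0 0 := fun g => by
    conv_lhs => rw [← mul_inv_cancel_left s g, map_mul]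
    simp [mul_apply, Fin.sum_univ_two, hs₁₀, hs₁₁]
  have h₁₁ : ∀ g, σ g 1 1 = σ (g * s) 1 0 := fun g => by
    simp [mul_apply, Fin.sum_univ_two, hs₀₀, hs₁₀]
  refine ⟨χ.toHomUnits, fun g => ?_⟩
  ext i j
  fin_cases i <;> fin_cases j <;> simp [indRep, hext, h₀₁, h₁₀, h₁₁, mul_assoc]

theorem exists_indRep_conj_of_twist (ρ : G →* Matrix (Fin 2) (Fin 2) ℂ)
    (ε : G →* ℂˣ) {A : Matrix (Fin 2) (Fin 2) ℂ} (hA : IsUnit A)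
    (hAρ : ∀ g, A * ρ g = (ε g : ℂ) • (ρ g * A)) {s : G} (hs : ε s ≠ 1) :
    ∃ (H : Subgroup G) (χ : H →* ℂˣ), s ∉ H ∧ H.index = 2 ∧
      ∃ P : Matrix (Fin 2) (Fin 2) ℂ, IsUnit P ∧ ∀ g, P * ρ g = indRep H χ s g * P := by
  have hsq : ∀ g, (ε g : ℂ) ^ 2 = 1 := by simpa using twist_pow_card_eq_one ρ ε hA hAρ
  have hker : ∀ g ∉ ε.ker, (ε g : ℂ) = -1 := fun g hg =>
    (sq_eq_one_iff.mp (hsq g)).resolve_left fun h => hg (Units.ext h)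
  obtain ⟨c, Q, hc, hQ, hAQ, hQs⟩ := exists_eigenbasis_of_mul_eq_neg_mul hA
    (M := ρ s) (ρ.toHomUnits s).isUnit (by rw [hAρ, hker s hs, neg_one_smul])
  have hc' : c ≠ -c := by simp [eq_neg_iff_add_eq_zero, ← two_mul, hc]
  have hQQ : Q⁻¹ * Q = 1 := nonsing_inv_mul Q ((isUnit_iff_isUnit_det Q).mp hQ)
  have hQQ' : Q * Q⁻¹ = 1 := mul_nonsing_inv Q ((isUnit_iff_isUnit_det Q).mp hQ)
  have hconj_mul : ∀ M N, Q⁻¹ * M * Q * (Q⁻¹ * N * Q) = Q⁻¹ * (M * N) * Q := fun M N => by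
    simp only [mul_assoc]; rw [← mul_assoc Q Q⁻¹, hQQ', one_mul]
  -- `ρ` in the basis `v, ρ(s) v` of the columns of `Q`, in which `A` is `diagonal ![c, -c]`
  let σ : G →* Matrix (Fin 2) (Fin 2) ℂ :=
    { toFun := fun g => Q⁻¹ * ρ g * Q
      map_one' := by simp [hQQ]
      map_mul' := fun a b => by simp only [map_mul, hconj_mul] }
  have hσ : ∀ g, diagonal ![c, -c] * σ g = (ε g : ℂ) • (σ g * diagonal ![c, -c]) := fun g => by
    have hD : diagonal ![c, -c] = Q⁻¹ * A * Q := by rw [mul_assoc, hAQ, ← mul_assoc, hQQ, one_mul]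
    simp only [σ, MonoidHom.coe_mk, OneHom.coe_mk, hD, hconj_mul, hAρ, mul_smul_comm,
      smul_mul_assoc]
  have hanti : ∀ g ∉ ε.ker, σ g 0 0 = 0 ∧ σ g 1 1 = 0 := fun g hg =>
    ⟨apply_eq_zero_of_diagonal_mul_eq_smul (hσ g) (by simpa [hker g hg] using hc'),
     apply_eq_zero_of_diagonal_mul_eq_smul (hσ g) (by simpa [hker g hg] using hc'.symm)⟩
  have hσs : σ s 1 0 = 1 := by
    have : (σ s).col 0 = Pi.single 1 1 := by
      simp only [σ, MonoidHom.coe_mk, OneHom.coe_mk, ← mulVec_single_one, ← mulVec_mulVec]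
      rw [mulVec_single_one, hQs, ← mulVec_single_one, mulVec_mulVec, hQQ, one_mulVec]
    simpa using congrFun this 1
  obtain ⟨χ, hχ⟩ := exists_eq_indRep σ ε.ker s (hanti s hs).1 hσs (hanti s hs).2
    (fun h hh => apply_eq_zero_of_diagonal_mul_eq_smul (hσ h)
      (by simpa [MonoidHom.mem_ker.mp hh] using hc'))
    (fun g hg => (hanti g hg).1)
  refine ⟨ε.ker, χ, hs, ε.index_ker_eq_two hsq hs, Q⁻¹, ?_, fun g => ?_⟩
  · exact (isUnit_nonsing_inv_iff).mpr hQ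
  · rw [← hχ]
    show Q⁻¹ * ρ g = Q⁻¹ * ρ g * Q * Q⁻¹
    rw [mul_assoc _ Q, hQQ', mul_one]

end

theorem det_eq_similitude_of_not_induced_general {G : Type*} [Group G]
    (ρ : G →* Matrix (Fin 2) (Fin 2) ℂ) (μ : G →* ℂˣ)
    (hni : ¬ ∃ (H : Subgroup G) (χ : H →* ℂˣ) (s : G), s ∉ H ∧ H.index = 2 ∧
      ∃ P : Matrix (Fin 2) (Fin 2) ℂ, IsUnit P ∧ ∀ g : G, P * ρ g = indRep H χ s g * P)
    (hdual : ∃ P : Matrix (Fin 2) (Fin 2) ℂ, IsUnit P ∧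
      ∀ g : G, P * ρ g = ((μ g : ℂ) • (ρ g⁻¹)ᵀ) * P) :
    ∀ g : G, (ρ g).det = (μ g : ℂ) := by
  obtain ⟨P, hP, hPρ⟩ := hdual
  obtain ⟨A, hA, hAρ⟩ := exists_twist_of_dual ρ μ hP hPρ
  intro g
  by_contra hg
  have hεg : (μ / ρ.detChar) g ≠ 1 := by
    rw [MonoidHom.div_apply, div_ne_one]
    exact fun h => hg (by rw [← ρ.coe_detChar_apply, h])
  obtain ⟨H, χ, hgH, hH, P', hP', hP'ρ⟩ := exists_indRep_conj_of_twist ρ _ hA hAρ hεg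
  exact hni ⟨H, χ, g, hgH, hH, P', hP', hP'ρ⟩

/-- If `ρ : G → GL₂(ℂ)` is irreducible, not induced from any index-two subgroup, and
`ρ ≅ ρ^∨ ⊗ μ` for a character `μ`, then `det ρ = μ`. -/
theorem det_eq_similitude_of_not_induced {G : Type*} [Group G]
    (ρ : G →* Matrix (Fin 2) (Fin 2) ℂ) (μ : G →* ℂˣ)
    (hirr : MatIrred 2 (fun g => ρ g))
    (hni : ¬ ∃ (H : Subgroup G) (χ : H →* ℂˣ) (s : G), s ∉ H ∧ H.index = 2 ∧
      ∃ P : Matrix (Fin 2) (Fin 2) ℂ, IsUnit P ∧ ∀ g : G, P * ρ g = indRep H χ s g * P)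
    (hdual : ∃ P : Matrix (Fin 2) (Fin 2) ℂ, IsUnit P ∧
      ∀ g : G, P * ρ g = ((μ g : ℂ) • (ρ g⁻¹)ᵀ) * P) :
    ∀ g : G, (ρ g).det = (μ g : ℂ) :=
  det_eq_similitude_of_not_induced_general ρ μ hni hdual
end

section
/- If Γ ≤ Sp₄(ℤ_ℓ) is a closed subgroup whose image in Sp₄(𝔽_ℓ) is all of Sp₄(𝔽_ℓ) and ℓ ≥ 5, then Γ = Sp₄(ℤ_ℓ). -/
open Matrix

theorem map_J (ℓ : ℕ) [Fact ℓ.Prime] :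
    (Matrix.J (Fin 2) ℤ_[ℓ]).map (PadicInt.toZMod (p := ℓ)) =
      Matrix.J (Fin 2) (ZMod ℓ) := by
  ext i j
  rcases i with i | i <;> rcases j with j | j <;>
    simp [Matrix.J, RingHom.mapMatrix_apply, Matrix.map_apply, Matrix.one_apply, apply_ite]

/-- Entrywise reduction mod `ℓ` as a group homomorphism `Sp₄(ℤ_ℓ) → Sp₄(𝔽_ℓ)`. -/
noncomputable def redSp (ℓ : ℕ) [Fact ℓ.Prime] :
    Matrix.symplecticGroup (Fin 2) ℤ_[ℓ] →* Matrix.symplecticGroup (Fin 2) (ZMod ℓ) :=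
  MonoidHom.mk'
    (fun A => ⟨(PadicInt.toZMod (p := ℓ)).mapMatrix (A : Matrix _ _ ℤ_[ℓ]), by
      have hA := SymplecticGroup.mem_iff.mp A.2
      rw [SymplecticGroup.mem_iff]
      have := congrArg (PadicInt.toZMod (p := ℓ)).mapMatrix hA
      simpa [Matrix.transpose_map, Matrix.map_mul, map_J ℓ] using this⟩)
    (fun A B => by
      ext i j
      simp [Matrix.mul_apply, map_sum])

namespace SpLiftAux

variable {ℓ : ℕ} [Fact ℓ.Prime]

local notation "Mat" => Matrix ((Fin 2) ⊕ (Fin 2)) ((Fin 2) ⊕ (Fin 2)) ℤ_[ℓ]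
local notation "Jm" => Matrix.J (Fin 2) ℤ_[ℓ]

/-- The scalar matrix `ℓ^n`. -/
noncomputable def Pm (ℓ : ℕ) [Fact ℓ.Prime] (n : ℕ) :
    Matrix ((Fin 2) ⊕ (Fin 2)) ((Fin 2) ⊕ (Fin 2)) ℤ_[ℓ] :=
  ((ℓ : ℤ_[ℓ]) ^ n) • 1

lemma Pm_mul (n : ℕ) (M : Mat) : Pm ℓ n * M = ((ℓ : ℤ_[ℓ]) ^ n) • M := by
  rw [Pm, smul_mul_assoc, one_mul]

lemma Pm_dvd_of_eq {n : ℕ} {M Z : Mat} (h : M = ((ℓ : ℤ_[ℓ]) ^ n) • Z) : Pm ℓ n ∣ M :=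
  ⟨Z, by rw [h, Pm_mul]⟩

lemma exists_of_Pm_dvd {n : ℕ} {M : Mat} (h : Pm ℓ n ∣ M) :
    ∃ Z : Mat, M = ((ℓ : ℤ_[ℓ]) ^ n) • Z := by
  obtain ⟨Z, hZ⟩ := h
  exact ⟨Z, by rw [hZ, Pm_mul]⟩

lemma Pm_dvd_mono {m n : ℕ} {M : Mat} (h : m ≤ n) (hd : Pm ℓ n ∣ M) : Pm ℓ m ∣ M := by
  obtain ⟨Z, hZ⟩ := exists_of_Pm_dvd hd
  refine Pm_dvd_of_eq (Z := ((ℓ : ℤ_[ℓ]) ^ (n - m)) • Z) ?_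
  rw [hZ, smul_smul, ← pow_add, Nat.add_sub_cancel' h]

lemma Pm_dvd_mul_left {n : ℕ} {M : Mat} (C : Mat) (h : Pm ℓ n ∣ M) : Pm ℓ n ∣ C * M := by
  obtain ⟨Z, hZ⟩ := exists_of_Pm_dvd h
  exact Pm_dvd_of_eq (Z := C * Z) (by rw [hZ, mul_smul_comm])

lemma Pm_dvd_mul_right {n : ℕ} {M : Mat} (C : Mat) (h : Pm ℓ n ∣ M) : Pm ℓ n ∣ M * C := by
  obtain ⟨Z, hZ⟩ := exists_of_Pm_dvd h
  exact Pm_dvd_of_eq (Z := Z * C) (by rw [hZ, smul_mul_assoc])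

lemma Pm_dvd_smul {n : ℕ} {M : Mat} (c : ℤ_[ℓ]) (h : Pm ℓ n ∣ M) : Pm ℓ n ∣ c • M := by
  obtain ⟨Z, hZ⟩ := exists_of_Pm_dvd h
  exact Pm_dvd_of_eq (Z := c • Z) (by rw [hZ, smul_smul, smul_smul, mul_comm])

lemma Pm_dvd_entry {n : ℕ} {M : Mat} (h : Pm ℓ n ∣ M) (i j : (Fin 2) ⊕ (Fin 2)) :
    (ℓ : ℤ_[ℓ]) ^ n ∣ M i j := by
  obtain ⟨Z, hZ⟩ := exists_of_Pm_dvd h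
  exact ⟨Z i j, by rw [hZ, Matrix.smul_apply, smul_eq_mul]⟩

lemma Pm_dvd_of_forall {n : ℕ} {M : Mat} (h : ∀ i j, (ℓ : ℤ_[ℓ]) ^ n ∣ M i j) : Pm ℓ n ∣ M := by
  refine Pm_dvd_of_eq (Z := Matrix.of fun i j => (h i j).choose) ?_
  ext i j
  simpa using (h i j).choose_spec

lemma natCast_Mat (m : ℕ) : ((m : ℕ) : Mat) = ((m : ℤ_[ℓ])) • (1 : Mat) := by
  rw [Nat.cast_smul_eq_nsmul, nsmul_eq_mul, mul_one]

/-- The key numerical estimate. -/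
lemma nat_dvd_term (hp : ℓ.Prime) (hℓ : 5 ≤ ℓ) (n k : ℕ) (h2 : 2 ≤ k) (hk : k ≤ ℓ) :
    ℓ ^ (n + 2) ∣ ℓ.choose k * ℓ ^ (n * k + k / 2) := by
  rcases eq_or_lt_of_le hk with rfl | hkl
  · apply dvd_mul_of_dvd_right
    apply pow_dvd_pow
    have h1 : n * 5 ≤ n * k := Nat.mul_le_mul_left n hℓ
    have h3 : 2 ≤ k / 2 := by omega
    omega
  · obtain ⟨c, hc⟩ := hp.dvd_choose_self (by omega) hkl
    rw [hc]
    have h1 : ℓ ^ (n + 1) ∣ ℓ ^ (n * k + k / 2) := by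
      apply pow_dvd_pow
      have := Nat.mul_le_mul_left n h2
      omega
    obtain ⟨d, hd⟩ := h1
    refine ⟨c * d, ?_⟩
    rw [hd]; ring

lemma pow_half_smul {B C : Mat} (hBC : B * B = (ℓ : ℤ_[ℓ]) • C) :
    ∀ k, ∃ W : Mat, B ^ k = ((ℓ : ℤ_[ℓ]) ^ (k / 2)) • W := by
  intro k
  induction k using Nat.twoStepInduction with
  | zero => exact ⟨1, by simp⟩
  | one => exact ⟨B, by simp⟩
  | more k ih _ =>
    obtain ⟨W, hW⟩ := ih
    refine ⟨W * C, ?_⟩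
    have hpow : B ^ (k + 2) = B ^ k * (B * B) := by rw [pow_add, pow_two]
    rw [hpow, hW, hBC, smul_mul_assoc, mul_smul_comm, smul_smul]
    have : (k + 2) / 2 = k / 2 + 1 := by omega
    rw [this, pow_succ]

/-- Key binomial estimate: the `ℓ`-th power map. -/
lemma key_pow (hℓ : 5 ≤ ℓ) {B C : Mat} (hBC : B * B = (ℓ : ℤ_[ℓ]) • C) (n : ℕ) :
    Pm ℓ (n + 2) ∣
      ((1 + ((ℓ : ℤ_[ℓ]) ^ n) • B) ^ ℓ - (1 + ((ℓ : ℤ_[ℓ]) ^ (n + 1)) • B)) := by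
  have hp : ℓ.Prime := Fact.out
  have hcomm : Commute (((ℓ : ℤ_[ℓ]) ^ n) • B) (1 : Mat) := Commute.one_right _
  have hexp : (1 + ((ℓ : ℤ_[ℓ]) ^ n) • B) ^ ℓ =
      ∑ k ∈ Finset.range (ℓ + 1),
        (((ℓ : ℤ_[ℓ]) ^ n) • B) ^ k * (1 : Mat) ^ (ℓ - k) * (ℓ.choose k : ℕ) := by
    rw [add_comm]
    exact hcomm.add_pow ℓ
  set f : ℕ → Mat :=
    fun k => (((ℓ : ℤ_[ℓ]) ^ n) • B) ^ k * (1 : Mat) ^ (ℓ - k) * (ℓ.choose k : ℕ) with hf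
  have hsplit : ∑ k ∈ Finset.range (ℓ + 1), f k
      = f 0 + (f 1 + ∑ k ∈ Finset.Ico 2 (ℓ + 1), f k) := by
    rw [Finset.range_eq_Ico, Finset.sum_eq_sum_Ico_succ_bot (by omega),
      Finset.sum_eq_sum_Ico_succ_bot (by omega)]
  have hf0 : f 0 = 1 := by simp [hf]
  have hf1 : f 1 = ((ℓ : ℤ_[ℓ]) ^ (n + 1)) • B := by
    rw [hf]
    simp only [pow_one, Nat.choose_one_right, one_pow, mul_one]
    rw [natCast_Mat, mul_smul_comm, mul_one, smul_smul, ← pow_succ']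
  have hdiff : (1 + ((ℓ : ℤ_[ℓ]) ^ n) • B) ^ ℓ - (1 + ((ℓ : ℤ_[ℓ]) ^ (n + 1)) • B)
      = ∑ k ∈ Finset.Ico 2 (ℓ + 1), f k := by
    rw [hexp, ← hf, hsplit, hf0, hf1]
    abel
  rw [hdiff]
  apply Finset.dvd_sum
  intro k hk
  simp only [Finset.mem_Ico] at hk
  obtain ⟨W, hW⟩ := pow_half_smul hBC k
  have hfk : f k = (((ℓ.choose k * ℓ ^ (n * k + k / 2) : ℕ)) : ℤ_[ℓ]) • W := by
    rw [hf]
    simp only [one_pow, mul_one]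
    rw [smul_pow, hW, smul_smul, natCast_Mat, mul_smul_comm, mul_one, smul_smul]
    congr 1
    push_cast
    ring
  obtain ⟨t, ht⟩ := nat_dvd_term hp hℓ n k hk.1 (by omega)
  refine Pm_dvd_of_eq (Z := (t : ℤ_[ℓ]) • W) ?_
  rw [hfk, ht, smul_smul]
  push_cast
  ring

section Transvection

lemma vJv_eq_zero (hℓ : 5 ≤ ℓ) (v : (Fin 2) ⊕ (Fin 2) → ℤ_[ℓ]) :
    v ⬝ᵥ (Jm *ᵥ v) = 0 := by
  have h2 : IsUnit (2 : ℤ_[ℓ]) := by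
    rw [PadicInt.isUnit_iff]
    refine le_antisymm (PadicInt.norm_le_one _) ?_
    by_contra hlt
    push_neg at hlt
    have : ((ℓ : ℤ) : ℤ) ∣ (2 : ℤ) := by
      have := (PadicInt.norm_int_lt_one_iff_dvd (p := ℓ) 2).mp (by
        simpa using hlt)
      simpa using this
    have := Int.le_of_dvd (by norm_num) this
    omega
  have hx : v ⬝ᵥ (Jm *ᵥ v) = -(v ⬝ᵥ (Jm *ᵥ v)) := by
    conv_lhs => rw [Matrix.dotProduct_mulVec]
    have hvm : v ᵥ* Jm = (Jmᵀ) *ᵥ v := by rw [Matrix.mulVec_transpose]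
    rw [hvm, Matrix.J_transpose, Matrix.neg_mulVec, neg_dotProduct,
      dotProduct_comm]
  have h2x : (2 : ℤ_[ℓ]) * (v ⬝ᵥ (Jm *ᵥ v)) = 0 := by
    rw [two_mul]
    nth_rewrite 1 [hx]
    ring
  obtain ⟨u, hu⟩ := h2.exists_left_inv
  calc v ⬝ᵥ (Jm *ᵥ v) = u * ((2 : ℤ_[ℓ]) * (v ⬝ᵥ (Jm *ᵥ v))) := by
        rw [← mul_assoc, hu, one_mul]
    _ = 0 := by rw [h2x, mul_zero]

lemma vvJvv (hℓ : 5 ≤ ℓ) (v : (Fin 2) ⊕ (Fin 2) → ℤ_[ℓ]) :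
    vecMulVec v v * Matrix.J (Fin 2) ℤ_[ℓ] * vecMulVec v v = 0 := by
  have hx : ∑ a, v a * ∑ b, Matrix.J (Fin 2) ℤ_[ℓ] a b * v b = 0 := by
    have := vJv_eq_zero hℓ v
    simpa [dotProduct, Matrix.mulVec] using this
  ext i j
  have : (vecMulVec v v * Matrix.J (Fin 2) ℤ_[ℓ] * vecMulVec v v) i j
      = (v i * v j) * ∑ a, v a * ∑ b, Matrix.J (Fin 2) ℤ_[ℓ] a b * v b := by
    simp only [Matrix.mul_apply, Matrix.vecMulVec_apply, Finset.sum_mul, Finset.mul_sum]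
    rw [Finset.sum_comm]
    apply Finset.sum_congr rfl
    intro a _
    apply Finset.sum_congr rfl
    intro b _
    ring
  rw [this, hx, mul_zero]
  simp

lemma VJ_sq (hℓ : 5 ≤ ℓ) (v : (Fin 2) ⊕ (Fin 2) → ℤ_[ℓ]) :
    (vecMulVec v v * Jm) * (vecMulVec v v * Jm) = 0 := by
  have h := vvJvv hℓ v
  calc (vecMulVec v v * Jm) * (vecMulVec v v * Jm)
      = (vecMulVec v v * Jm * vecMulVec v v) * Jm := by
        simp only [Matrix.mul_assoc]
    _ = 0 := by rw [h, Matrix.zero_mul]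

lemma transvection_mem (hℓ : 5 ≤ ℓ) (c : ℤ_[ℓ]) (v : (Fin 2) ⊕ (Fin 2) → ℤ_[ℓ]) :
    (1 + c • (vecMulVec v v * Jm)) ∈ Matrix.symplecticGroup (Fin 2) ℤ_[ℓ] := by
  rw [SymplecticGroup.mem_iff]
  have hP : (vecMulVec v v)ᵀ = vecMulVec v v := by
    ext i j; simp [Matrix.vecMulVec_apply, mul_comm]
  have hJJ := Matrix.J_squared (Fin 2) ℤ_[ℓ]
  have hJT := Matrix.J_transpose (Fin 2) ℤ_[ℓ]
  have ht : (1 + c • (vecMulVec v v * Jm))ᵀ = 1 - c • (Jm * vecMulVec v v) := by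
    rw [Matrix.transpose_add, Matrix.transpose_one, Matrix.transpose_smul,
      Matrix.transpose_mul, hJT, hP, Matrix.neg_mul, smul_neg, ← sub_eq_add_neg]
  rw [ht]
  have e1 : (1 + c • (vecMulVec v v * Jm)) * Jm = Jm - c • vecMulVec v v := by
    rw [add_mul, one_mul, smul_mul_assoc, Matrix.mul_assoc, hJJ, Matrix.mul_neg,
      Matrix.mul_one, smul_neg, ← sub_eq_add_neg]
  rw [e1, sub_mul, mul_sub, mul_sub, Matrix.mul_one, Matrix.mul_one]
  have e2 : Jm * (c • (Jm * vecMulVec v v)) = -(c • vecMulVec v v) := by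
    rw [mul_smul_comm, ← Matrix.mul_assoc, hJJ]
    simp
  have e3 : (c • vecMulVec v v) * (c • (Jm * vecMulVec v v)) = 0 := by
    rw [smul_mul_assoc, mul_smul_comm, ← Matrix.mul_assoc, vvJvv hℓ v]
    simp
  rw [e2, e3]
  abel

end Transvection

lemma two_unit (hℓ : 5 ≤ ℓ) : ∃ u : ℤ_[ℓ], 2 * u = 1 := by
  have h2 : IsUnit (2 : ℤ_[ℓ]) := by
    rw [PadicInt.isUnit_iff]
    refine le_antisymm (PadicInt.norm_le_one _) ?_
    by_contra hlt
    push_neg at hlt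
    have hdvd : ((ℓ : ℤ) : ℤ) ∣ (2 : ℤ) := by
      have := (PadicInt.norm_int_lt_one_iff_dvd (p := ℓ) 2).mp (by simpa using hlt)
      simpa using this
    have := Int.le_of_dvd (by norm_num) hdvd
    omega
  obtain ⟨u, hu⟩ := h2.exists_right_inv
  exact ⟨u, hu⟩

lemma smul_eq_zero_mat {c : ℤ_[ℓ]} (hc : c ≠ 0) {M : Mat} (h : c • M = 0) : M = 0 := by
  ext i j
  have h1 : c * M i j = 0 := by
    have := congrFun (congrFun h i) j
    simpa [Matrix.smul_apply, smul_eq_mul] using this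
  rcases mul_eq_zero.mp h1 with h2 | h2
  · exact absurd h2 hc
  · simpa using h2

section Decomp

local notation "Lt" => (Fin 2) ⊕ (Fin 2)

/-- Index type for the spanning family of rank-one symmetric matrices. -/
abbrev Idx : Type := ((Fin 2 ⊕ Fin 2) × (Fin 2 ⊕ Fin 2)) ⊕
  (((Fin 2 ⊕ Fin 2) × (Fin 2 ⊕ Fin 2)) ⊕ ((Fin 2 ⊕ Fin 2) × (Fin 2 ⊕ Fin 2)))

variable (ℓ) in
/-- The vectors in the spanning family. -/
noncomputable def uvec (p : Idx) : (Fin 2 ⊕ Fin 2) → ℤ_[ℓ] :=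
  Sum.elim (fun q => (Pi.single q.1 1 : (Fin 2 ⊕ Fin 2) → ℤ_[ℓ]) + Pi.single q.2 1)
    (Sum.elim (fun q => (Pi.single q.1 1 : (Fin 2 ⊕ Fin 2) → ℤ_[ℓ]))
      (fun q => (Pi.single q.2 1 : (Fin 2 ⊕ Fin 2) → ℤ_[ℓ]))) p

variable (ℓ) in
/-- The coefficients in the spanning family. -/
noncomputable def cco (half : ℤ_[ℓ]) (S : Mat) (p : Idx) : ℤ_[ℓ] :=
  Sum.elim (fun q => half * S q.1 q.2)
    (Sum.elim (fun q => -(half * S q.1 q.2)) (fun q => -(half * S q.1 q.2))) p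

lemma vmv_add (i j : Lt) :
    vecMulVec ((Pi.single i 1 : Lt → ℤ_[ℓ]) + (Pi.single j 1 : Lt → ℤ_[ℓ]))
        ((Pi.single i 1 : Lt → ℤ_[ℓ]) + (Pi.single j 1 : Lt → ℤ_[ℓ]))
      = vecMulVec (Pi.single i 1 : Lt → ℤ_[ℓ]) (Pi.single i 1 : Lt → ℤ_[ℓ])
        + vecMulVec (Pi.single j 1 : Lt → ℤ_[ℓ]) (Pi.single j 1 : Lt → ℤ_[ℓ])
        + (Matrix.single i j 1 + Matrix.single j i 1) := by
  ext a b
  simp only [Matrix.add_apply, Matrix.vecMulVec_apply, Pi.add_apply, Pi.single_apply,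
    Matrix.single, Matrix.of_apply]
  by_cases hij : i = j
  · subst hij
    by_cases hai : a = i <;> by_cases hbi : b = i
    · subst hai; subst hbi; simp; norm_num
    · subst hai; simp [hbi, Ne.symm hbi]
    · subst hbi; simp [hai, Ne.symm hai]
    · simp [hai, hbi, Ne.symm hai, Ne.symm hbi]
  · by_cases hai : a = i <;> by_cases haj : a = j <;> by_cases hbi : b = i <;>
      by_cases hbj : b = j <;> simp_all <;> try ring
    all_goals simp_all [eq_comm] <;> try ring

lemma sum_cV (half : ℤ_[ℓ]) (S : Mat) :
    ∑ p : Idx, cco ℓ half S p • vecMulVec (uvec ℓ p) (uvec ℓ p) = half • (S + Sᵀ) := by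
  have h1 : ∑ q : Lt × Lt, (S q.1 q.2) • (Matrix.single q.1 q.2 (1 : ℤ_[ℓ])) = S := by
    rw [Fintype.sum_prod_type]
    conv_rhs => rw [matrix_eq_sum_single S]
    refine Finset.sum_congr rfl fun i _ => Finset.sum_congr rfl fun j _ => ?_
    rw [smul_single, smul_eq_mul, mul_one]
  have h2 : ∑ q : Lt × Lt, (S q.1 q.2) • (Matrix.single q.2 q.1 (1 : ℤ_[ℓ])) = Sᵀ := by
    rw [Fintype.sum_prod_type, Finset.sum_comm]
    conv_rhs => rw [matrix_eq_sum_single Sᵀ]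
    refine Finset.sum_congr rfl fun j _ => Finset.sum_congr rfl fun i _ => ?_
    rw [smul_single, smul_eq_mul, mul_one, Matrix.transpose_apply]
  have hsplit : ∑ p : Idx, cco ℓ half S p • vecMulVec (uvec ℓ p) (uvec ℓ p)
      = ∑ q : Lt × Lt, (half * S q.1 q.2) •
          (Matrix.single q.1 q.2 (1 : ℤ_[ℓ]) + Matrix.single q.2 q.1 1) := by
    rw [Fintype.sum_sum_type, Fintype.sum_sum_type]
    rw [← Finset.sum_add_distrib]
    rw [← Finset.sum_add_distrib]
    refine Finset.sum_congr rfl fun q _ => ?_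
    simp only [cco, uvec, Sum.elim_inl, Sum.elim_inr]
    rw [vmv_add q.1 q.2]
    simp only [smul_add, neg_smul]
    abel
  rw [hsplit]
  have hpt : ∀ q : Lt × Lt, (half * S q.1 q.2) •
      (Matrix.single q.1 q.2 (1 : ℤ_[ℓ]) + Matrix.single q.2 q.1 1)
      = half • (S q.1 q.2 • Matrix.single q.1 q.2 (1 : ℤ_[ℓ]))
        + half • (S q.1 q.2 • Matrix.single q.2 q.1 (1 : ℤ_[ℓ])) := by
    intro q
    rw [smul_add, mul_smul, mul_smul]
  rw [Finset.sum_congr rfl fun q _ => hpt q, Finset.sum_add_distrib,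
    ← Finset.smul_sum, ← Finset.smul_sum, h1, h2, ← smul_add]

end Decomp

lemma list_map_univ_sum {ι : Type*} [Fintype ι] {M : Type*} [AddCommMonoid M] (f : ι → M) :
    ((Finset.univ.toList).map f).sum = ∑ p, f p := by
  rw [← Multiset.sum_coe, ← Multiset.map_coe, Finset.coe_toList]
  rfl

lemma list_prod_cong (n : ℕ) (Ms Ns : List Mat)
    (h : List.Forall₂
      (fun M N' => Pm ℓ (n + 2) ∣ (M - (1 + ((ℓ : ℤ_[ℓ]) ^ (n + 1)) • N'))) Ms Ns) :
    Pm ℓ (n + 2) ∣ (Ms.prod - (1 + ((ℓ : ℤ_[ℓ]) ^ (n + 1)) • Ns.sum)) := by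
  induction h with
  | nil => simp
  | @cons M N' Ms Ns h1 h2 ih =>
    rw [List.prod_cons, List.sum_cons]
    have hmul : Pm ℓ (n + 2) ∣ (M * Ms.prod -
        (1 + ((ℓ : ℤ_[ℓ]) ^ (n + 1)) • N') * (1 + ((ℓ : ℤ_[ℓ]) ^ (n + 1)) • Ns.sum)) := by
      have hsplit : M * Ms.prod -
          (1 + ((ℓ : ℤ_[ℓ]) ^ (n + 1)) • N') * (1 + ((ℓ : ℤ_[ℓ]) ^ (n + 1)) • Ns.sum)
          = (M - (1 + ((ℓ : ℤ_[ℓ]) ^ (n + 1)) • N')) * Ms.prod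
            + (1 + ((ℓ : ℤ_[ℓ]) ^ (n + 1)) • N') *
              (Ms.prod - (1 + ((ℓ : ℤ_[ℓ]) ^ (n + 1)) • Ns.sum)) := by
        rw [sub_mul, mul_sub]
        abel
      rw [hsplit]
      exact dvd_add (Pm_dvd_mul_right _ h1) (Pm_dvd_mul_left _ ih)
    have hsc : (ℓ : ℤ_[ℓ]) ^ (n + 1) * (ℓ : ℤ_[ℓ]) ^ (n + 1)
        = (ℓ : ℤ_[ℓ]) ^ (n + 2) * (ℓ : ℤ_[ℓ]) ^ n := by
      rw [← pow_add, ← pow_add]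
      congr 1
      omega
    have hprod2 : (1 + ((ℓ : ℤ_[ℓ]) ^ (n + 1)) • N') * (1 + ((ℓ : ℤ_[ℓ]) ^ (n + 1)) • Ns.sum)
        = 1 + ((ℓ : ℤ_[ℓ]) ^ (n + 1)) • N' + ((ℓ : ℤ_[ℓ]) ^ (n + 1)) • Ns.sum
          + ((ℓ : ℤ_[ℓ]) ^ (n + 1) * (ℓ : ℤ_[ℓ]) ^ (n + 1)) • (N' * Ns.sum) := by
      simp only [mul_add, add_mul, mul_one, one_mul, smul_mul_assoc, mul_smul_comm, smul_smul,
        smul_add]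
      abel
    have hexp : (1 + ((ℓ : ℤ_[ℓ]) ^ (n + 1)) • N') * (1 + ((ℓ : ℤ_[ℓ]) ^ (n + 1)) • Ns.sum)
        - (1 + ((ℓ : ℤ_[ℓ]) ^ (n + 1)) • (N' + Ns.sum))
        = ((ℓ : ℤ_[ℓ]) ^ (n + 2)) • (((ℓ : ℤ_[ℓ]) ^ n) • (N' * Ns.sum)) := by
      rw [hprod2, hsc, smul_add, smul_smul]
      abel
    have := dvd_add hmul (Pm_dvd_of_eq hexp)
    rwa [sub_add_sub_cancel] at this

set_option maxHeartbeats 2000000 in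
/-- Main approximation: `Γ` surjects mod `ℓ^(n+1)` for every `n`. -/
lemma approx (hℓ : 5 ≤ ℓ) (Γ : Subgroup (Matrix.symplecticGroup (Fin 2) ℤ_[ℓ]))
    (hsurj : Γ.map (redSp ℓ) = ⊤) :
    ∀ n, ∀ A : Matrix.symplecticGroup (Fin 2) ℤ_[ℓ],
      ∃ γ ∈ Γ, Pm ℓ (n + 1) ∣ ((γ : Mat) - (A : Mat)) := by
  classical
  intro n
  induction n with
  | zero =>
    intro A
    have hmem : redSp ℓ A ∈ Γ.map (redSp ℓ) := by rw [hsurj]; trivial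
    obtain ⟨γ, hγ, hred⟩ := Subgroup.mem_map.mp hmem
    refine ⟨γ, hγ, Pm_dvd_of_forall fun i j => ?_⟩
    have hij : PadicInt.toZMod ((γ : Mat) i j) = PadicInt.toZMod ((A : Mat) i j) := by
      have h1 := congrArg (fun M : Matrix.symplecticGroup (Fin 2) (ZMod ℓ) =>
        (M : Matrix ((Fin 2) ⊕ (Fin 2)) ((Fin 2) ⊕ (Fin 2)) (ZMod ℓ)) i j) hred
      simpa [redSp, RingHom.mapMatrix_apply, Matrix.map_apply] using h1
    have hker : ((γ : Mat) i j - (A : Mat) i j) ∈ RingHom.ker (PadicInt.toZMod (p := ℓ)) := by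
      rw [RingHom.mem_ker, map_sub, hij, sub_self]
    rw [PadicInt.ker_toZMod, PadicInt.maximalIdeal_eq_span_p, Ideal.mem_span_singleton] at hker
    simpa [pow_one] using hker
  | succ n ih =>
    intro A
    obtain ⟨γ₀, hγ₀, hcg0⟩ := ih A
    obtain ⟨half, hhalf⟩ := two_unit hℓ
    set D : Matrix.symplecticGroup (Fin 2) ℤ_[ℓ] := A * γ₀⁻¹ with hDdef
    have hDmat : Pm ℓ (n + 1) ∣ ((D : Mat) - 1) := by
      obtain ⟨Z, hZ⟩ := exists_of_Pm_dvd hcg0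
      refine Pm_dvd_of_eq (Z := (-Z) * ((γ₀⁻¹ : Matrix.symplecticGroup (Fin 2) ℤ_[ℓ]) : Mat)) ?_
      have h1 : (D : Mat) - 1
          = ((A : Mat) - (γ₀ : Mat)) * ((γ₀⁻¹ : Matrix.symplecticGroup (Fin 2) ℤ_[ℓ]) : Mat) := by
        rw [sub_mul, hDdef, MulMemClass.coe_mul]
        congr 1
        rw [← MulMemClass.coe_mul, mul_inv_cancel, OneMemClass.coe_one]
      have h2 : (A : Mat) - (γ₀ : Mat) = ((ℓ : ℤ_[ℓ]) ^ (n + 1)) • (-Z) := by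
        rw [← neg_sub, hZ, smul_neg]
      rw [h1, h2, smul_mul_assoc]
    obtain ⟨X, hX⟩ := exists_of_Pm_dvd hDmat
    have hDX : (D : Mat) = 1 + ((ℓ : ℤ_[ℓ]) ^ (n + 1)) • X := by
      rw [← hX]; abel
    have hsym : (D : Mat) * Matrix.J (Fin 2) ℤ_[ℓ] * (D : Mat)ᵀ = Matrix.J (Fin 2) ℤ_[ℓ] :=
      SymplecticGroup.mem_iff.mp D.2
    have hXJ : Pm ℓ (n + 1) ∣ (X * Matrix.J (Fin 2) ℤ_[ℓ] + Matrix.J (Fin 2) ℤ_[ℓ] * Xᵀ) := by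
      have hexp : (D : Mat) * Matrix.J (Fin 2) ℤ_[ℓ] * (D : Mat)ᵀ
          = Matrix.J (Fin 2) ℤ_[ℓ] + ((ℓ : ℤ_[ℓ]) ^ (n + 1)) •
            (X * Matrix.J (Fin 2) ℤ_[ℓ] + Matrix.J (Fin 2) ℤ_[ℓ] * Xᵀ
              + ((ℓ : ℤ_[ℓ]) ^ (n + 1)) • (X * (Matrix.J (Fin 2) ℤ_[ℓ] * Xᵀ))) := by
        rw [hDX, Matrix.transpose_add, Matrix.transpose_one, Matrix.transpose_smul]
        simp only [add_mul, mul_add, one_mul, mul_one, smul_mul_assoc, mul_smul_comm, smul_add,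
          smul_smul, Matrix.mul_assoc]
        abel
      have h0 : ((ℓ : ℤ_[ℓ]) ^ (n + 1)) •
          (X * Matrix.J (Fin 2) ℤ_[ℓ] + Matrix.J (Fin 2) ℤ_[ℓ] * Xᵀ
            + ((ℓ : ℤ_[ℓ]) ^ (n + 1)) • (X * (Matrix.J (Fin 2) ℤ_[ℓ] * Xᵀ))) = 0 := by
        have h := hsym
        rw [hexp] at h
        exact add_eq_left.mp h
      have hcne : ((ℓ : ℤ_[ℓ]) ^ (n + 1)) ≠ 0 := by
        apply pow_ne_zero
        exact_mod_cast (Fact.out : ℓ.Prime).ne_zero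
      have hc0 := smul_eq_zero_mat hcne h0
      refine Pm_dvd_of_eq (Z := -(X * (Matrix.J (Fin 2) ℤ_[ℓ] * Xᵀ))) ?_
      rw [smul_neg]
      exact eq_neg_of_add_eq_zero_left hc0
    -- the symmetric matrix S
    set S : Mat := -(X * Matrix.J (Fin 2) ℤ_[ℓ]) with hSdef
    have hS : S * Matrix.J (Fin 2) ℤ_[ℓ] = X := by
      rw [hSdef, Matrix.neg_mul, Matrix.mul_assoc, Matrix.J_squared]
      simp
    have hST : Sᵀ * Matrix.J (Fin 2) ℤ_[ℓ]
        = Matrix.J (Fin 2) ℤ_[ℓ] * Xᵀ * Matrix.J (Fin 2) ℤ_[ℓ] := by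
      rw [hSdef, Matrix.transpose_neg, Matrix.transpose_mul, Matrix.J_transpose]
      simp [Matrix.neg_mul, Matrix.mul_neg]
    have hSX : Pm ℓ 1 ∣ ((half • (S + Sᵀ)) * Matrix.J (Fin 2) ℤ_[ℓ] - X) := by
      have hhalfX : half • ((2 : ℤ_[ℓ]) • X) = X := by
        rw [smul_smul, mul_comm, hhalf, one_smul]
      have hkey : (half • (S + Sᵀ)) * Matrix.J (Fin 2) ℤ_[ℓ] - X
          = half • ((X * Matrix.J (Fin 2) ℤ_[ℓ] + Matrix.J (Fin 2) ℤ_[ℓ] * Xᵀ)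
              * Matrix.J (Fin 2) ℤ_[ℓ]) := by
        calc (half • (S + Sᵀ)) * Matrix.J (Fin 2) ℤ_[ℓ] - X
            = half • (S * Matrix.J (Fin 2) ℤ_[ℓ] + Sᵀ * Matrix.J (Fin 2) ℤ_[ℓ])
              - half • ((2 : ℤ_[ℓ]) • X) := by
              rw [hhalfX, smul_mul_assoc, add_mul]
          _ = half • (X + Matrix.J (Fin 2) ℤ_[ℓ] * Xᵀ * Matrix.J (Fin 2) ℤ_[ℓ]
                - (2 : ℤ_[ℓ]) • X) := by
              rw [hS, hST, ← smul_sub]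
          _ = half • ((X * Matrix.J (Fin 2) ℤ_[ℓ] + Matrix.J (Fin 2) ℤ_[ℓ] * Xᵀ)
              * Matrix.J (Fin 2) ℤ_[ℓ]) := by
              congr 1
              rw [add_mul, Matrix.mul_assoc X, Matrix.J_squared, Matrix.mul_neg, Matrix.mul_one,
                two_smul]
              abel
      rw [hkey]
      exact Pm_dvd_smul _ (Pm_dvd_mul_right _ (Pm_dvd_mono (by omega) hXJ))
    -- generator elements
    have hgen : ∀ p : Idx, ∃ g : Matrix.symplecticGroup (Fin 2) ℤ_[ℓ], g ∈ Γ ∧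
        Pm ℓ (n + 2) ∣ ((g : Mat) - (1 + ((ℓ : ℤ_[ℓ]) ^ (n + 1)) •
          (cco ℓ half S p • (vecMulVec (uvec ℓ p) (uvec ℓ p) * Matrix.J (Fin 2) ℤ_[ℓ])))) := by
      intro p
      set c : ℤ_[ℓ] := cco ℓ half S p with hcdef
      set V : Mat := vecMulVec (uvec ℓ p) (uvec ℓ p) * Matrix.J (Fin 2) ℤ_[ℓ] with hVdef
      have hVV : V * V = 0 := VJ_sq hℓ (uvec ℓ p)
      have hmemT : (1 + ((ℓ : ℤ_[ℓ]) ^ n * c) • V) ∈ Matrix.symplecticGroup (Fin 2) ℤ_[ℓ] :=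
        transvection_mem hℓ _ (uvec ℓ p)
      obtain ⟨γ, hγΓ, hγcg⟩ := ih ⟨_, hmemT⟩
      have hMcoe : ((⟨1 + ((ℓ : ℤ_[ℓ]) ^ n * c) • V, hmemT⟩ :
          Matrix.symplecticGroup (Fin 2) ℤ_[ℓ]) : Mat) = 1 + ((ℓ : ℤ_[ℓ]) ^ n * c) • V := rfl
      rw [hMcoe] at hγcg
      obtain ⟨M, hM⟩ := exists_of_Pm_dvd hγcg
      have hγB : (γ : Mat) = 1 + ((ℓ : ℤ_[ℓ]) ^ n) • (c • V + (ℓ : ℤ_[ℓ]) • M) := by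
        have h1 : (γ : Mat) = (1 + ((ℓ : ℤ_[ℓ]) ^ n * c) • V)
            + ((ℓ : ℤ_[ℓ]) ^ (n + 1)) • M := by
          rw [← hM]; abel
        rw [h1]
        module
      have hBB : (c • V + (ℓ : ℤ_[ℓ]) • M) * (c • V + (ℓ : ℤ_[ℓ]) • M)
          = (ℓ : ℤ_[ℓ]) • (c • (V * M) + c • (M * V) + (ℓ : ℤ_[ℓ]) • (M * M)) := by
        simp only [add_mul, mul_add, smul_mul_assoc, mul_smul_comm, hVV, smul_zero]
        module
      refine ⟨γ ^ ℓ, Subgroup.pow_mem Γ hγΓ ℓ, ?_⟩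
      have hcoe : ((γ ^ ℓ : Matrix.symplecticGroup (Fin 2) ℤ_[ℓ]) : Mat) = ((γ : Mat)) ^ ℓ :=
        SubmonoidClass.coe_pow γ ℓ
      rw [hcoe, hγB]
      have hkp := key_pow hℓ hBB n
      have hNB : (1 + ((ℓ : ℤ_[ℓ]) ^ (n + 1)) • (c • V + (ℓ : ℤ_[ℓ]) • M))
          - (1 + ((ℓ : ℤ_[ℓ]) ^ (n + 1)) • (c • V)) = ((ℓ : ℤ_[ℓ]) ^ (n + 2)) • M := by
        module
      have hfin := dvd_add hkp (Pm_dvd_of_eq hNB)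
      rwa [sub_add_sub_cancel] at hfin
    choose g hgΓ hgcg using hgen
    -- assemble the product of generators
    have hforall : List.Forall₂
        (fun M N' => Pm ℓ (n + 2) ∣ (M - (1 + ((ℓ : ℤ_[ℓ]) ^ (n + 1)) • N')))
        (((Finset.univ.toList (α := Idx)).map g).map
          (fun x : Matrix.symplecticGroup (Fin 2) ℤ_[ℓ] => (x : Mat)))
        ((Finset.univ.toList (α := Idx)).map (fun p => cco ℓ half S p •
          (vecMulVec (uvec ℓ p) (uvec ℓ p) * Matrix.J (Fin 2) ℤ_[ℓ]))) := by
      rw [List.map_map, List.forall₂_map_left_iff, List.forall₂_map_right_iff,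
        List.forall₂_same]
      intro p _
      exact hgcg p
    have hprodΓ : ((Finset.univ.toList (α := Idx)).map g).prod ∈ Γ := by
      apply Subgroup.list_prod_mem
      intro x hx
      obtain ⟨p, _, rfl⟩ := List.mem_map.mp hx
      exact hgΓ p
    have hprodcg := list_prod_cong n _ _ hforall
    rw [list_map_univ_sum] at hprodcg
    have hsum : ∑ p : Idx, cco ℓ half S p •
        (vecMulVec (uvec ℓ p) (uvec ℓ p) * Matrix.J (Fin 2) ℤ_[ℓ])
        = (half • (S + Sᵀ)) * Matrix.J (Fin 2) ℤ_[ℓ] := by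
      have h1 : ∀ p : Idx, cco ℓ half S p •
          (vecMulVec (uvec ℓ p) (uvec ℓ p) * Matrix.J (Fin 2) ℤ_[ℓ])
          = (cco ℓ half S p • vecMulVec (uvec ℓ p) (uvec ℓ p)) * Matrix.J (Fin 2) ℤ_[ℓ] :=
        fun p => (smul_mul_assoc _ _ _).symm
      rw [Finset.sum_congr rfl fun p _ => h1 p, ← Finset.sum_mul, sum_cV]
    rw [hsum] at hprodcg
    have hcoeprod : (((((Finset.univ.toList (α := Idx)).map g).prod :
          Matrix.symplecticGroup (Fin 2) ℤ_[ℓ])) : Mat)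
        = (((Finset.univ.toList (α := Idx)).map g).map
            (fun x : Matrix.symplecticGroup (Fin 2) ℤ_[ℓ] => (x : Mat))).prod :=
      SubmonoidClass.coe_list_prod _
    rw [← hcoeprod] at hprodcg
    have h2 : Pm ℓ (n + 2) ∣ ((1 + ((ℓ : ℤ_[ℓ]) ^ (n + 1)) •
        ((half • (S + Sᵀ)) * Matrix.J (Fin 2) ℤ_[ℓ])) - (D : Mat)) := by
      obtain ⟨Y, hY⟩ := exists_of_Pm_dvd hSX
      rw [pow_one] at hY
      refine Pm_dvd_of_eq (Z := Y) ?_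
      rw [hDX]
      have hdiff : (1 + ((ℓ : ℤ_[ℓ]) ^ (n + 1)) •
          ((half • (S + Sᵀ)) * Matrix.J (Fin 2) ℤ_[ℓ])) - (1 + ((ℓ : ℤ_[ℓ]) ^ (n + 1)) • X)
          = ((ℓ : ℤ_[ℓ]) ^ (n + 1)) • ((half • (S + Sᵀ)) * Matrix.J (Fin 2) ℤ_[ℓ] - X) := by
        rw [smul_sub]; abel
      rw [hdiff, hY, smul_smul, ← pow_succ]
    have hstep1 : Pm ℓ (n + 2) ∣
        (((((Finset.univ.toList (α := Idx)).map g).prod :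
          Matrix.symplecticGroup (Fin 2) ℤ_[ℓ])) : Mat) - (D : Mat) := by
      have hadd := dvd_add hprodcg h2
      rwa [sub_add_sub_cancel] at hadd
    refine ⟨((Finset.univ.toList (α := Idx)).map g).prod * γ₀, Γ.mul_mem hprodΓ hγ₀, ?_⟩
    have hDγ : D * γ₀ = A := by
      rw [hDdef]; exact inv_mul_cancel_right A γ₀
    have hfinal : ((((Finset.univ.toList (α := Idx)).map g).prod * γ₀ :
          Matrix.symplecticGroup (Fin 2) ℤ_[ℓ]) : Mat) - (A : Mat)
        = (((((Finset.univ.toList (α := Idx)).map g).prod :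
            Matrix.symplecticGroup (Fin 2) ℤ_[ℓ]) : Mat) - (D : Mat)) * (γ₀ : Mat) := by
      rw [MulMemClass.coe_mul, sub_mul]
      congr 1
      rw [← MulMemClass.coe_mul, hDγ]
    have hres := Pm_dvd_mul_right ((γ₀ : Mat)) hstep1
    rw [← hfinal] at hres
    exact hres

end SpLiftAux

/-- For `ℓ ≥ 5`, a closed subgroup of `Sp₄(ℤ_ℓ)` whose image under reduction mod `ℓ` is
all of `Sp₄(𝔽_ℓ)` must be all of `Sp₄(ℤ_ℓ)`. -/
theorem closed_subgroup_eq_top_of_surj_mod_ell (ℓ : ℕ) [Fact ℓ.Prime] (hℓ : 5 ≤ ℓ)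
    (Γ : Subgroup (Matrix.symplecticGroup (Fin 2) ℤ_[ℓ]))
    (hclosed : IsClosed (Γ : Set (Matrix.symplecticGroup (Fin 2) ℤ_[ℓ])))
    (hsurj : Γ.map (redSp ℓ) = ⊤) :
    Γ = ⊤ := by
  rw [eq_top_iff]
  intro A _
  have happrox := SpLiftAux.approx hℓ Γ hsurj
  choose γ hmem hcg using fun n => happrox n A
  have htend : Filter.Tendsto γ Filter.atTop (nhds A) := by
    rw [tendsto_subtype_rng]
    refine tendsto_pi_nhds.mpr ?_
    intro i
    rw [tendsto_pi_nhds]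
    intro j
    rw [tendsto_iff_dist_tendsto_zero]
    have hb : ∀ n : ℕ, dist (((γ n : Matrix.symplecticGroup (Fin 2) ℤ_[ℓ]) :
        Matrix ((Fin 2) ⊕ (Fin 2)) ((Fin 2) ⊕ (Fin 2)) ℤ_[ℓ]) i j)
        ((A : Matrix ((Fin 2) ⊕ (Fin 2)) ((Fin 2) ⊕ (Fin 2)) ℤ_[ℓ]) i j)
        ≤ ((ℓ : ℝ)⁻¹) ^ (n + 1) := by
      intro n
      rw [dist_eq_norm]
      have hdvd := SpLiftAux.Pm_dvd_entry (hcg n) i j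
      have hmemspan : (((γ n : Matrix.symplecticGroup (Fin 2) ℤ_[ℓ]) :
          Matrix ((Fin 2) ⊕ (Fin 2)) ((Fin 2) ⊕ (Fin 2)) ℤ_[ℓ]) i j
          - (A : Matrix ((Fin 2) ⊕ (Fin 2)) ((Fin 2) ⊕ (Fin 2)) ℤ_[ℓ]) i j)
          ∈ Ideal.span {((ℓ : ℤ_[ℓ])) ^ (n + 1)} := Ideal.mem_span_singleton.mpr hdvd
      have hnorm := (PadicInt.norm_le_pow_iff_mem_span_pow _ (n + 1)).mpr hmemspan
      calc _ ≤ ((ℓ : ℝ)) ^ (-((n : ℤ) + 1)) := by exact_mod_cast hnorm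
        _ = ((ℓ : ℝ)⁻¹) ^ (n + 1) := by
            rw [_root_.zpow_neg, inv_pow]
            norm_cast
    have hℓ1 : (1 : ℝ) < (ℓ : ℝ) := by
      have : (5 : ℝ) ≤ (ℓ : ℝ) := by exact_mod_cast hℓ
      linarith
    have h0 : (0 : ℝ) ≤ (ℓ : ℝ)⁻¹ := by positivity
    have h1 : (ℓ : ℝ)⁻¹ < 1 := by
      rw [inv_lt_one_iff₀]
      right
      exact hℓ1
    have htpow := tendsto_pow_atTop_nhds_zero_of_lt_one h0 h1
    have htpow' : Filter.Tendsto (fun n : ℕ => ((ℓ : ℝ)⁻¹) ^ (n + 1))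
        Filter.atTop (nhds 0) := by
      have := htpow.comp (Filter.tendsto_add_atTop_nat 1)
      simpa [Function.comp_def] using this
    exact squeeze_zero (fun n => dist_nonneg) hb htpow'
  have hclos : A ∈ closure (Γ : Set (Matrix.symplecticGroup (Fin 2) ℤ_[ℓ])) :=
    mem_closure_of_tendsto htend (Filter.Eventually.of_forall hmem)
  rwa [hclosed.closure_eq] at hclos
end
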